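/- Let q be a complex number with 0 < |q| < 1, and let b, d, e, f be complex numbers with b ≠ 0, d·e·f = 1, d ≠ 1, e ≠ 1, f ≠ 1, and b·q^{k+1}/d ≠ 1, b·q^{k+1}/e ≠ 1, b·q^{k+1}/f ≠ 1 for every integer k ≥ 0. Then ∑_{n=0}^{∞} (1 + b·q^n)·((bd;q)_n·(be;q)_n·(bf;q)_n / ((bq/d;q)_n·(bq/e;q)_n·(bq/f;q)_n))·q^n = ( (bd;q)_∞·(be;q)_∞·(bf;q)_∞ − (b/d;q)_∞·(b/e;q)_∞·(b/f;q)_∞ ) / ( b·(1−d)·(1−e)·(1−f)·(bq/d;q)_∞·(bq/e;q)_∞·(bq/f;q)_∞ ). -/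

import Mathlib

/-- The finite q-Pochhammer symbol `(a;q)_n = ∏_{k=0}^{n-1} (1 - a q^k)`. -/
noncomputable def qPoch (a q : ℂ) (n : ℕ) : ℂ := ∏ k ∈ Finset.range n, (1 - a * q ^ k)

/-- The infinite q-Pochhammer symbol `(a;q)_∞ = ∏_{k=0}^{∞} (1 - a q^k)`. -/
noncomputable def qPochInf (a q : ℂ) : ℂ := ∏' k : ℕ, (1 - a * q ^ k)

/-!
Let `r n` (`poisedRatio`) be the ratio of q-Pochhammer products in the summand and
`W x = (1 - b x / d) (1 - b x / e) (1 - b x / f)` (`poisedFactor`). Since `d e f = 1`,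
`(1 - b d x) (1 - b e x) (1 - b f x) = W x + b (1 - d) (1 - e) (1 - f) (1 + b x) x`,
and `W (q ^ (n + 1))` is the factor by which the denominator of `r` grows from `n` to `n + 1`.
Hence `b (1 - d) (1 - e) (1 - f)` times the `n`-th summand is `G (n + 1) - G n` for
`G n = r n * W (q ^ n)`, and the series telescopes to `(lim G - G 0) / (b (1 - d) (1 - e) (1 - f))`.
Here `lim G` is the ratio of the infinite products and `G 0 = W 1`, which
`(b / d; q)_∞ = (1 - b / d) (b q / d; q)_∞` turns into the stated right-hand side.
-/

open Filter Topology Finset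

lemma qPoch_succ (a q : ℂ) (n : ℕ) : qPoch a q (n + 1) = qPoch a q n * (1 - a * q ^ n) :=
  prod_range_succ _ _

lemma qPoch_succ' (a q : ℂ) (n : ℕ) : qPoch a q (n + 1) = (1 - a) * qPoch (a * q) q n := by
  rw [qPoch, qPoch, prod_range_succ', mul_comm]
  simp only [pow_zero, mul_one, pow_succ', mul_assoc]

lemma summable_norm_mul_pow {q : ℂ} (hq : ‖q‖ < 1) (a : ℂ) :
    Summable fun k : ℕ => ‖a * q ^ k‖ := by
  simpa only [norm_mul, norm_pow] using
    (summable_geometric_of_lt_one (norm_nonneg q) hq).mul_left ‖a‖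

lemma multipliable_one_sub_mul_pow {q : ℂ} (hq : ‖q‖ < 1) (a : ℂ) :
    Multipliable fun k : ℕ => 1 - a * q ^ k := by
  simpa only [sub_eq_add_neg] using
    multipliable_one_add_of_summable (f := fun k : ℕ => -(a * q ^ k))
      (by simpa only [norm_neg] using summable_norm_mul_pow hq a)

lemma tendsto_qPoch {q : ℂ} (hq : ‖q‖ < 1) (a : ℂ) :
    Tendsto (qPoch a q) atTop (𝓝 (qPochInf a q)) :=
  (multipliable_one_sub_mul_pow hq a).hasProd.tendsto_prod_nat

lemma qPochInf_ne_zero {q : ℂ} (hq : ‖q‖ < 1) {a : ℂ} (h : ∀ k : ℕ, 1 - a * q ^ k ≠ 0) :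
    qPochInf a q ≠ 0 := by
  simpa only [qPochInf, sub_eq_add_neg] using
    tprod_one_add_ne_zero_of_summable (f := fun k : ℕ => -(a * q ^ k))
      (by simpa only [← sub_eq_add_neg] using h)
      (by simpa only [norm_neg] using summable_norm_mul_pow hq a)

lemma qPochInf_eq_one_sub_mul {q : ℂ} (hq : ‖q‖ < 1) (a : ℂ) :
    qPochInf a q = (1 - a) * qPochInf (a * q) q :=
  tendsto_nhds_unique ((tendsto_add_atTop_iff_nat 1).2 (tendsto_qPoch hq a))
    (by simpa only [qPoch_succ'] using (tendsto_qPoch hq (a * q)).const_mul (1 - a))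

lemma summable_mul_pow_of_tendsto {c : ℕ → ℂ} {L q : ℂ} (hc : Tendsto c atTop (𝓝 L))
    (hq : ‖q‖ < 1) : Summable fun n => c n * q ^ n :=
  have hO : (fun n => c n * q ^ n) =O[atTop] fun n => ‖q‖ ^ n := by
    simpa only [one_mul, norm_pow] using
      ((hc.isBigO_one ℂ).mul (Asymptotics.isBigO_refl (q ^ ·) atTop)).norm_right
  summable_of_isBigO_nat (summable_geometric_of_lt_one (norm_nonneg q) hq) hO

lemma hasSum_of_mul_eq_sub_of_tendsto {𝕜 : Type*} [NormedField 𝕜] {t G : ℕ → 𝕜} {D L : 𝕜}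
    (hD : D ≠ 0) (ht : Summable t) (htG : ∀ n, D * t n = G (n + 1) - G n)
    (hG : Tendsto G atTop (𝓝 L)) : HasSum t ((L - G 0) / D) := by
  have hpartial : ∀ N, ∑ n ∈ range N, t n = (G N - G 0) / D := fun N => by
    rw [eq_div_iff hD, sum_mul, ← sum_range_sub]
    exact sum_congr rfl fun n _ => by rw [mul_comm, htG]
  have hlim : Tendsto (fun N => ∑ n ∈ range N, t n) atTop (𝓝 ((L - G 0) / D)) := by
    simpa only [hpartial] using (hG.sub_const (G 0)).div_const D
  rw [← tendsto_nhds_unique ht.hasSum.tendsto_sum_nat hlim]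
  exact ht.hasSum

section WellPoised

variable (b d e f q : ℂ)

noncomputable def poisedRatio (n : ℕ) : ℂ :=
  qPoch (b * d) q n * qPoch (b * e) q n * qPoch (b * f) q n /
    (qPoch (b * q / d) q n * qPoch (b * q / e) q n * qPoch (b * q / f) q n)

noncomputable def poisedFactor (x : ℂ) : ℂ :=
  (1 - b / d * x) * (1 - b / e * x) * (1 - b / f * x)

variable {b d e f q}

lemma poisedFactor_add (hdef : d * e * f = 1) (x : ℂ) :
    poisedFactor b d e f x + b * (1 - d) * (1 - e) * (1 - f) * ((1 + b * x) * x) =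
      (1 - b * d * x) * (1 - b * e * x) * (1 - b * f * x) := by
  have hd : d ≠ 0 := left_ne_zero_of_mul (left_ne_zero_of_mul (hdef ▸ one_ne_zero))
  have he : e ≠ 0 := right_ne_zero_of_mul (left_ne_zero_of_mul (hdef ▸ one_ne_zero))
  have hf : f ≠ 0 := right_ne_zero_of_mul (hdef ▸ one_ne_zero)
  have hbd : b / d = b * (e * f) := by rw [div_eq_iff hd]; linear_combination -b * hdef
  have hbe : b / e = b * (d * f) := by rw [div_eq_iff he]; linear_combination -b * hdef
  have hbf : b / f = b * (d * e) := by rw [div_eq_iff hf]; linear_combination -b * hdef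
  rw [poisedFactor, hbd, hbe, hbf]
  linear_combination (b ^ 2 * x ^ 2 * (d + e + f - 1) - b * x - b ^ 3 * x ^ 3 * (d * e * f)) * hdef

lemma poisedRatio_succ_mul (hd : ∀ k : ℕ, 1 - b * q / d * q ^ k ≠ 0)
    (he : ∀ k : ℕ, 1 - b * q / e * q ^ k ≠ 0) (hf : ∀ k : ℕ, 1 - b * q / f * q ^ k ≠ 0) (n : ℕ) :
    poisedRatio b d e f q (n + 1) * poisedFactor b d e f (q ^ (n + 1)) =
      poisedRatio b d e f q n *
        ((1 - b * d * q ^ n) * (1 - b * e * q ^ n) * (1 - b * f * q ^ n)) := by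
  have hP : ∀ c, (∀ k : ℕ, 1 - b * q / c * q ^ k ≠ 0) → qPoch (b * q / c) q n ≠ 0 :=
    fun c hc => prod_ne_zero_iff.2 fun k _ => hc k
  have hshift : poisedFactor b d e f (q ^ (n + 1)) =
      (1 - b * q / d * q ^ n) * (1 - b * q / e * q ^ n) * (1 - b * q / f * q ^ n) := by
    rw [poisedFactor]; ring
  have hYd := hd n
  have hYe := he n
  have hYf := hf n
  have hPd := hP d hd
  have hPe := hP e he
  have hPf := hP f hf
  rw [hshift, poisedRatio, poisedRatio, qPoch_succ, qPoch_succ, qPoch_succ, qPoch_succ,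
    qPoch_succ, qPoch_succ]
  generalize 1 - b * q / d * q ^ n = Yd at *
  generalize 1 - b * q / e * q ^ n = Ye at *
  generalize 1 - b * q / f * q ^ n = Yf at *
  generalize qPoch (b * q / d) q n = Pd at *
  generalize qPoch (b * q / e) q n = Pe at *
  generalize qPoch (b * q / f) q n = Pf at *
  field_simp

lemma tendsto_poisedRatio (hq : ‖q‖ < 1)
    (hP : qPochInf (b * q / d) q * qPochInf (b * q / e) q * qPochInf (b * q / f) q ≠ 0) :
    Tendsto (poisedRatio b d e f q) atTop
      (𝓝 (qPochInf (b * d) q * qPochInf (b * e) q * qPochInf (b * f) q /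
        (qPochInf (b * q / d) q * qPochInf (b * q / e) q * qPochInf (b * q / f) q))) :=
  (((tendsto_qPoch hq _).mul (tendsto_qPoch hq _)).mul (tendsto_qPoch hq _)).div
    (((tendsto_qPoch hq _).mul (tendsto_qPoch hq _)).mul (tendsto_qPoch hq _)) hP

lemma tendsto_poisedFactor_pow (hq : ‖q‖ < 1) :
    Tendsto (fun n => poisedFactor b d e f (q ^ n)) atTop (𝓝 1) := by
  have hcont : Continuous (poisedFactor b d e f) := by unfold poisedFactor; fun_prop
  simpa only [Function.comp_def, poisedFactor, mul_zero, sub_zero, mul_one] using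
    (hcont.tendsto 0).comp (tendsto_pow_atTop_nhds_zero_of_norm_lt_one hq)

lemma poisedTerm_telescopes (hdef : d * e * f = 1) (hd : ∀ k : ℕ, 1 - b * q / d * q ^ k ≠ 0)
    (he : ∀ k : ℕ, 1 - b * q / e * q ^ k ≠ 0) (hf : ∀ k : ℕ, 1 - b * q / f * q ^ k ≠ 0) (n : ℕ) :
    b * (1 - d) * (1 - e) * (1 - f) * ((1 + b * q ^ n) * poisedRatio b d e f q n * q ^ n) =
      poisedRatio b d e f q (n + 1) * poisedFactor b d e f (q ^ (n + 1)) -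
        poisedRatio b d e f q n * poisedFactor b d e f (q ^ n) := by
  rw [poisedRatio_succ_mul hd he hf, ← poisedFactor_add hdef]
  ring

end WellPoised

theorem stmt18_general (q b d e f : ℂ) (hq1 : ‖q‖ < 1)
    (hb : b ≠ 0) (hdef : d * e * f = 1) (hd1 : d ≠ 1) (he1 : e ≠ 1) (hf1 : f ≠ 1)
    (hd : ∀ k : ℕ, b * q ^ (k + 1) / d ≠ 1) (he : ∀ k : ℕ, b * q ^ (k + 1) / e ≠ 1)
    (hf : ∀ k : ℕ, b * q ^ (k + 1) / f ≠ 1) :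
    ∑' n : ℕ, (1 + b * q ^ n) *
        (qPoch (b * d) q n * qPoch (b * e) q n * qPoch (b * f) q n /
          (qPoch (b * q / d) q n * qPoch (b * q / e) q n * qPoch (b * q / f) q n)) * q ^ n =
      (qPochInf (b * d) q * qPochInf (b * e) q * qPochInf (b * f) q -
          qPochInf (b / d) q * qPochInf (b / e) q * qPochInf (b / f) q) /
        (b * (1 - d) * (1 - e) * (1 - f) *
          (qPochInf (b * q / d) q * qPochInf (b * q / e) q * qPochInf (b * q / f) q)) := by
  have hden : ∀ c : ℂ, (∀ k : ℕ, b * q ^ (k + 1) / c ≠ 1) → ∀ k : ℕ, 1 - b * q / c * q ^ k ≠ 0 :=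
    fun c hc k h => hc k (by linear_combination -h)
  have hD : b * (1 - d) * (1 - e) * (1 - f) ≠ 0 := by
    simp only [ne_eq, mul_eq_zero, sub_eq_zero, not_or]
    exact ⟨⟨⟨hb, hd1.symm⟩, he1.symm⟩, hf1.symm⟩
  have hPd := qPochInf_ne_zero hq1 (hden d hd)
  have hPe := qPochInf_ne_zero hq1 (hden e he)
  have hPf := qPochInf_ne_zero hq1 (hden f hf)
  have hratio := tendsto_poisedRatio hq1 (mul_ne_zero (mul_ne_zero hPd hPe) hPf)
  have hpow := tendsto_pow_atTop_nhds_zero_of_norm_lt_one hq1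
  have hsum := hasSum_of_mul_eq_sub_of_tendsto hD
    (summable_mul_pow_of_tendsto ((tendsto_const_nhds.add (hpow.const_mul b)).mul hratio) hq1)
    (poisedTerm_telescopes hdef (hden d hd) (hden e he) (hden f hf))
    (hratio.mul (tendsto_poisedFactor_pow hq1))
  refine hsum.tsum_eq.trans ?_
  simp only [poisedRatio, poisedFactor, qPoch, range_zero, prod_empty, pow_zero]
  rw [qPochInf_eq_one_sub_mul hq1 (b / d), qPochInf_eq_one_sub_mul hq1 (b / e),
    qPochInf_eq_one_sub_mul hq1 (b / f), div_mul_eq_mul_div, div_mul_eq_mul_div, div_mul_eq_mul_div]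
  field_simp

theorem stmt18 (q b d e f : ℂ) (hq0 : 0 < ‖q‖) (hq1 : ‖q‖ < 1)
    (hb : b ≠ 0) (hdef : d * e * f = 1) (hd1 : d ≠ 1) (he1 : e ≠ 1) (hf1 : f ≠ 1)
    (hd : ∀ k : ℕ, b * q ^ (k + 1) / d ≠ 1) (he : ∀ k : ℕ, b * q ^ (k + 1) / e ≠ 1)
    (hf : ∀ k : ℕ, b * q ^ (k + 1) / f ≠ 1) :
    ∑' n : ℕ, (1 + b * q ^ n) *
        (qPoch (b * d) q n * qPoch (b * e) q n * qPoch (b * f) q n /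
          (qPoch (b * q / d) q n * qPoch (b * q / e) q n * qPoch (b * q / f) q n)) * q ^ n =
      (qPochInf (b * d) q * qPochInf (b * e) q * qPochInf (b * f) q -
          qPochInf (b / d) q * qPochInf (b / e) q * qPochInf (b / f) q) /
        (b * (1 - d) * (1 - e) * (1 - f) *
          (qPochInf (b * q / d) q * qPochInf (b * q / e) q * qPochInf (b * q / f) q)) :=
  stmt18_general q b d e f hq1 hb hdef hd1 he1 hf1 hd he hf
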